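/- arXiv:1310.8623 — 3 statements merged into one kernel-verified Lean document; each statement's English description precedes it below -/
import Mathlib

section
/- Let μ_a and μ_b be Borel probability measures on [0,1] that are absolutely continuous with respect to Lebesgue measure. For each N ≥ 1 let (a_{N,n})_{n≤N} and (b_{N,n})_{n≤N} be numbers in [0,1], and assume that for every continuous function f on [0,1] one has (1/N)Σ_{n≤N} f(a_{N,n}) → ∫ f dμ_a and (1/N)Σ_{n≤N} f(b_{N,n}) → ∫ f dμ_b as N → ∞. For x ∈ [0,1] let y_l(x) be the smallest y ∈ [0,1] with μ_b([y,1]) = μ_a([0,x]) and y_u(x) the largest y ∈ [0,1] with μ_b([0,y]) = μ_a([0,x]). Then liminf_{N→∞} (1/N)Σ_{n≤N} a_{N,n} b_{N,n} ≥ ∫₀¹ x·y_l(x) dμ_a(x) and limsup_{N→∞} (1/N)Σ_{n≤N} a_{N,n} b_{N,n} ≤ ∫₀¹ x·y_u(x) dμ_a(x). -/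
/-!
Layer cake: for `a, b ∈ [0,1]`, `a * b` is the area of `{q ∈ [0,1]² | q ≤ (a, b)}`, so for any
measure `ν` on `[0,1]²` one has `∫ x y dν = ∫_{[0,1]²} ν (Ici q) dq`. Applied to the empirical
coupling `ν_N` of the pairs `(a_{N,n}, b_{N,n})`, the integrand `ν_N (Ici q)` lies between the
Fréchet–Hoeffding bounds `(A + B - 1)⁺` and `min A B` of its marginal tails `A`, `B`, which
converge to `μa (Ici q.1)` and `μb (Ici q.2)` by the portmanteau theorem (no atoms). Fatou's
lemma and its reverse carry the bounds to the liminf and limsup. Finally, the graphs of `yl` and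
`yu` are the antitone and monotone couplings of `μa` and `μb`, and on quadrants these attain the
lower and upper Fréchet–Hoeffding bounds, because upper and lower sets of `ℝ` are nested; the
layer cake formula then turns the two bounds into `∫ x yl(x) dμa` and `∫ x yu(x) dμa`.
-/

open MeasureTheory Filter Set Topology BoundedContinuousFunction
open scoped ENNReal

lemma monotoneOn_of_isGreatest {α β γ : Type*} [Preorder α] [LinearOrder β] [PartialOrder γ]
    {s : Set α} {t : Set β} {F : α → γ} {G : β → γ} {y : α → β} (hF : MonotoneOn F s)
    (hG : Monotone G) (hy : ∀ x ∈ s, IsGreatest {z ∈ t | G z = F x} (y x)) : MonotoneOn y s := by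
  intro x₁ hx₁ x₂ hx₂ hx
  by_contra! hlt
  obtain ⟨⟨ht₁, hG₁⟩, -⟩ := hy x₁ hx₁
  obtain ⟨⟨-, hG₂⟩, hmax₂⟩ := hy x₂ hx₂
  have hG₁₂ : G (y x₁) = F x₂ := (hG₁ ▸ hF hx₁ hx₂ hx).antisymm (hG₂ ▸ hG hlt.le)
  exact hlt.not_ge (hmax₂ ⟨ht₁, hG₁₂⟩)

lemma antitoneOn_of_isLeast {α β γ : Type*} [Preorder α] [LinearOrder β] [PartialOrder γ]
    {s : Set α} {t : Set β} {F : α → γ} {G : β → γ} {y : α → β} (hF : MonotoneOn F s)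
    (hG : Antitone G) (hy : ∀ x ∈ s, IsLeast {z ∈ t | G z = F x} (y x)) : AntitoneOn y s :=
  monotoneOn_of_isGreatest (β := βᵒᵈ) (G := G ∘ OrderDual.ofDual) hF hG.dual_left hy

lemma Iic_inter_Icc_of_le {α : Type*} [Lattice α] {a b c : α} (h : b ≤ c) :
    Iic b ∩ Icc a c = Icc a b := by
  rw [← Ici_inter_Iic, inter_left_comm, Iic_inter_Iic, inf_eq_left.2 h, Ici_inter_Iic]

namespace MeasureTheory

section Empirical

variable {α : Type*} [MeasurableSpace α]

/-- For `N = 0` this is the zero measure, as `(0 : ℝ≥0∞)⁻¹ • 0 = ∞ • 0 = 0`. -/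
noncomputable def empiricalMeasure (x : ℕ → α) (N : ℕ) : Measure α :=
  (N : ℝ≥0∞)⁻¹ • ∑ n ∈ Finset.Icc 1 N, Measure.dirac (x n)

lemma empiricalMeasure_apply (x : ℕ → α) (N : ℕ) {s : Set α} (hs : MeasurableSet s) :
    empiricalMeasure x N s = (N : ℝ≥0∞)⁻¹ * ∑ n ∈ Finset.Icc 1 N, s.indicator 1 (x n) := by
  simp [empiricalMeasure, Measure.finsetSum_apply, Measure.dirac_apply' _ hs]

lemma empiricalMeasure_preimage {β : Type*} [MeasurableSpace β] (x : ℕ → α) (N : ℕ) {f : α → β}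
    (hf : Measurable f) {s : Set β} (hs : MeasurableSet s) :
    empiricalMeasure x N (f ⁻¹' s) = empiricalMeasure (f ∘ x) N s := by
  rw [empiricalMeasure_apply _ _ (hf hs), empiricalMeasure_apply _ _ hs]
  rfl

lemma ae_empiricalMeasure_mem (x : ℕ → α) (N : ℕ) {s : Set α} (hs : MeasurableSet s)
    (hx : ∀ n, x n ∈ s) : ∀ᵐ y ∂empiricalMeasure x N, y ∈ s := by
  rw [ae_iff, ← compl_def, empiricalMeasure_apply _ _ hs.compl]
  simp [hx]

lemma isProbabilityMeasure_empiricalMeasure (x : ℕ → α) {N : ℕ} (hN : N ≠ 0) :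
    IsProbabilityMeasure (empiricalMeasure x N) :=
  ⟨by simp [empiricalMeasure_apply x N MeasurableSet.univ, ENNReal.inv_mul_cancel, hN]⟩

lemma empiricalMeasure_le_one (x : ℕ → α) (N : ℕ) (s : Set α) : empiricalMeasure x N s ≤ 1 :=
  calc empiricalMeasure x N s ≤ empiricalMeasure x N univ := measure_mono (subset_univ s)
    _ = (N : ℝ≥0∞)⁻¹ * N := by simp [empiricalMeasure_apply x N MeasurableSet.univ]
    _ ≤ 1 := ENNReal.inv_mul_le_one _

instance (x : ℕ → α) (N : ℕ) : IsFiniteMeasure (empiricalMeasure x N) :=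
  ⟨(empiricalMeasure_le_one x N univ).trans_lt ENNReal.one_lt_top⟩

lemma lintegral_empiricalMeasure [MeasurableSingletonClass α] (x : ℕ → α) (N : ℕ) (f : α → ℝ≥0∞) :
    ∫⁻ y, f y ∂empiricalMeasure x N = (N : ℝ≥0∞)⁻¹ * ∑ n ∈ Finset.Icc 1 N, f (x n) := by
  simp [empiricalMeasure, lintegral_finsetSum_measure]

lemma lintegral_ofReal_empiricalMeasure [MeasurableSingletonClass α] (x : ℕ → α) (N : ℕ)
    {f : α → ℝ} (hf : ∀ n, 0 ≤ f (x n)) :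
    ∫⁻ y, ENNReal.ofReal (f y) ∂empiricalMeasure x N =
      ENNReal.ofReal (1 / (N : ℝ) * ∑ n ∈ Finset.Icc 1 N, f (x n)) := by
  rw [lintegral_empiricalMeasure]
  rcases N.eq_zero_or_pos with rfl | hN
  · simp
  rw [ENNReal.ofReal_mul (by positivity), ENNReal.ofReal_sum_of_nonneg fun n _ => hf n, one_div,
    ENNReal.ofReal_inv_of_pos (by positivity), ENNReal.ofReal_natCast]

lemma integral_empiricalMeasure [MeasurableSingletonClass α] (x : ℕ → α) (N : ℕ) (f : α → ℝ) :
    ∫ y, f y ∂empiricalMeasure x N = 1 / (N : ℝ) * ∑ n ∈ Finset.Icc 1 N, f (x n) := by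
  rw [empiricalMeasure, integral_smul_measure,
    integral_finsetSum_measure fun n _ => integrable_dirac enorm_lt_top]
  simp

lemma tendsto_empiricalMeasure_of_null_frontier [MeasurableSingletonClass α] [TopologicalSpace α]
    [OpensMeasurableSpace α] [HasOuterApproxClosed α] (μ : Measure α) [IsProbabilityMeasure μ]
    (x : ℕ → ℕ → α) (hx : ∀ f : α →ᵇ ℝ, Tendsto (fun N : ℕ => 1 / (N : ℝ) *
      ∑ n ∈ Finset.Icc 1 N, f (x N n)) atTop (𝓝 (∫ y, f y ∂μ)))
    {E : Set α} (hE : μ (frontier E) = 0) :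
    Tendsto (fun N => empiricalMeasure (x N) N E) atTop (𝓝 (μ E)) := by
  let νs : ℕ → ProbabilityMeasure α := fun N =>
    ⟨empiricalMeasure (x (N + 1)) (N + 1), isProbabilityMeasure_empiricalMeasure _ N.succ_ne_zero⟩
  have hνs : Tendsto νs atTop (𝓝 ⟨μ, ‹_›⟩) :=
    ProbabilityMeasure.tendsto_iff_forall_integral_tendsto.mpr fun f => by
      simpa [νs, integral_empiricalMeasure] using (tendsto_add_atTop_iff_nat 1).mpr (hx f)
  exact (tendsto_add_atTop_iff_nat 1).mp
    (ProbabilityMeasure.tendsto_measure_of_null_frontier_of_tendsto' hνs hE)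

end Empirical

section LinearOrder

variable {α : Type*} [MeasurableSpace α] [LinearOrder α] {μ : Measure α} {s t : Set α}

lemma measure_inter_of_isUpperSet (hs : IsUpperSet s) (ht : IsUpperSet t) :
    μ (s ∩ t) = min (μ s) (μ t) := by
  rcases hs.total ht with h | h
  · rw [inter_eq_left.2 h, min_eq_left (measure_mono h)]
  · rw [inter_eq_right.2 h, min_eq_right (measure_mono h)]

lemma measure_inter_le_of_isUpperSet_of_isLowerSet [IsProbabilityMeasure μ] (hs : IsUpperSet s)
    (ht : IsLowerSet t) (ht_meas : MeasurableSet t) : μ (s ∩ t) ≤ μ s + μ t - 1 := by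
  rcases hs.compl.total ht with h | h
  · rw [← measure_union_add_inter s ht_meas, compl_subset_iff_union.1 h, measure_univ,
      ENNReal.add_sub_cancel_left ENNReal.one_ne_top]
  · rw [eq_empty_of_forall_notMem fun x (hx : x ∈ s ∩ t) => h hx.2 hx.1, measure_empty]
    exact zero_le

end LinearOrder

lemma measure_add_measure_sub_one_le_measure_inter {α : Type*} [MeasurableSpace α] {μ : Measure α}
    (hμ : μ univ ≤ 1) (s : Set α) {t : Set α} (ht : MeasurableSet t) :
    μ s + μ t - 1 ≤ μ (s ∩ t) := by
  rw [← measure_union_add_inter s ht, tsub_le_iff_left]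
  exact add_le_add_left ((measure_mono (subset_univ _)).trans hμ) _

lemma isLowerSet_setOf_measure_Iic_le (μ : Measure ℝ) (β : ℝ≥0∞) :
    IsLowerSet {x | μ (Iic x) ≤ β} :=
  fun _ _ hyx hx => (measure_mono (Iic_subset_Iic.2 hyx)).trans hx

lemma measure_setOf_measure_Iic_le (μ : Measure ℝ) (β : ℝ≥0∞) :
    μ {x | μ (Iic x) ≤ β} ≤ β := by
  set L := {x | μ (Iic x) ≤ β}
  by_cases hmax : ∃ m ∈ L, ∀ x ∈ L, x ≤ m
  · obtain ⟨m, hm, hle⟩ := hmax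
    exact (measure_mono hle).trans hm
  push Not at hmax
  have hsub : L ⊆ ⋃ q : {q : ℚ // (q : ℝ) ∈ L}, Iic (q : ℝ) := by
    intro x hx
    obtain ⟨y, hy, hxy⟩ := hmax x hx
    obtain ⟨q, hxq, hqy⟩ := exists_rat_btwn hxy
    exact mem_iUnion.2 ⟨⟨q, isLowerSet_setOf_measure_Iic_le μ β hqy.le hy⟩, hxq.le⟩
  have hdir : Directed (· ⊆ ·) fun q : {q : ℚ // (q : ℝ) ∈ L} => Iic (q : ℝ) :=
    Monotone.directed_le fun q r hqr => Iic_subset_Iic.2 (by exact_mod_cast hqr)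
  calc μ L ≤ μ (⋃ q : {q : ℚ // (q : ℝ) ∈ L}, Iic (q : ℝ)) := measure_mono hsub
    _ = ⨆ q : {q : ℚ // (q : ℝ) ∈ L}, μ (Iic (q : ℝ)) := hdir.measure_iUnion
    _ ≤ β := iSup_le fun q => q.2

lemma measurable_measure_Ici {α : Type*} [MeasurableSpace α] [TopologicalSpace α] [PartialOrder α]
    [OrderClosedTopology α] [SecondCountableTopology α] [OpensMeasurableSpace α]
    (ν : Measure α) [SFinite ν] : Measurable fun q => ν (Ici q) :=
  measurable_measure_prodMk_left (measurableSet_le measurable_fst measurable_snd)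

lemma lintegral_measure_Ici_eq_lintegral_mul (ν : Measure (ℝ × ℝ)) [SFinite ν]
    (hν : ∀ᵐ p ∂ν, p ∈ Icc 0 1) :
    ∫⁻ q in Icc 0 1, ν (Ici q) = ∫⁻ p, ENNReal.ofReal (p.1 * p.2) ∂ν := by
  have hS : MeasurableSet {z : (ℝ × ℝ) × (ℝ × ℝ) | z.1 ≤ z.2} :=
    measurableSet_le measurable_fst measurable_snd
  calc ∫⁻ q in Icc 0 1, ν (Ici q)
      = (volume.restrict (Icc 0 1)).prod ν {z | z.1 ≤ z.2} := (Measure.prod_apply hS).symm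
    _ = ∫⁻ p, volume.restrict (Icc 0 1) (Iic p) ∂ν := Measure.prod_apply_symm hS
    _ = _ := lintegral_congr_ae (hν.mono fun p hp => ?_)
  dsimp only
  rw [Measure.restrict_apply measurableSet_Iic, Iic_inter_Icc_of_le hp.2, Icc_prod_eq,
    Measure.volume_eq_prod, Measure.prod_prod, Real.volume_Icc, Real.volume_Icc,
    ← ENNReal.ofReal_mul (by simpa using hp.1.1)]
  simp

lemma ofReal_setIntegral_mul_eq_lintegral (μ : Measure ℝ) [IsFiniteMeasure μ] {g : ℝ → ℝ}
    (hg : AEMeasurable g (μ.restrict (Icc 0 1))) (hg01 : MapsTo g (Icc 0 1) (Icc 0 1)) :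
    ENNReal.ofReal (∫ x in Icc 0 1, x * g x ∂μ) =
      ∫⁻ q in Icc (0 : ℝ × ℝ) 1, μ.restrict (Icc 0 1) {x | q.1 ≤ x ∧ q.2 ≤ g x} := by
  have hφ : AEMeasurable (fun x => (x, g x)) (μ.restrict (Icc 0 1)) := aemeasurable_id.prodMk hg
  have hmem : ∀ᵐ x ∂μ.restrict (Icc 0 1), x ∈ Icc (0 : ℝ) 1 := ae_restrict_mem measurableSet_Icc
  have hbound : ∀ᵐ x ∂μ.restrict (Icc 0 1), x * g x ∈ Icc (0 : ℝ) 1 := hmem.mono fun x hx =>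
    ⟨mul_nonneg hx.1 (hg01 hx).1, mul_le_one₀ hx.2 (hg01 hx).1 (hg01 hx).2⟩
  have hint : Integrable (fun x => x * g x) (μ.restrict (Icc 0 1)) :=
    .of_bound (aemeasurable_id.mul hg).aestronglyMeasurable 1 (hbound.mono fun x hx => by
      rw [Real.norm_of_nonneg hx.1]; exact hx.2)
  rw [ofReal_integral_eq_lintegral_ofReal hint (hbound.mono fun x hx => hx.1),
    ← lintegral_map' (f := fun p : ℝ × ℝ => ENNReal.ofReal (p.1 * p.2)) (by fun_prop) hφ,
    ← lintegral_measure_Ici_eq_lintegral_mul]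
  · congr with q
    exact Measure.map_apply_of_aemeasurable hφ measurableSet_Ici
  · exact (ae_map_iff hφ measurableSet_Icc).2 (hmem.mono fun x hx =>
      ⟨⟨hx.1, (hg01 hx).1⟩, ⟨hx.2, (hg01 hx).2⟩⟩)

section Graph

variable {μ ν : Measure ℝ} [IsProbabilityMeasure μ] {g : ℝ → ℝ} {t : ℝ}

lemma measure_graph_le (hg : ∀ x ∈ Icc 0 1, t ≤ g x → μ (Iic x) ≤ ν (Ici t)) (s : ℝ) :
    μ.restrict (Icc 0 1) {x | s ≤ x ∧ t ≤ g x} ≤ μ (Ici s) + ν (Ici t) - 1 := by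
  set L := {x | μ (Iic x) ≤ ν (Ici t)}
  have hL : IsLowerSet L := isLowerSet_setOf_measure_Iic_le μ _
  calc μ.restrict (Icc 0 1) {x | s ≤ x ∧ t ≤ g x}
      = μ ({x | s ≤ x ∧ t ≤ g x} ∩ Icc 0 1) := Measure.restrict_apply' measurableSet_Icc
    _ ≤ μ (Ici s ∩ L) := measure_mono fun x ⟨⟨hs, ht⟩, hx⟩ => ⟨hs, hg x hx ht⟩
    _ ≤ μ (Ici s) + μ L - 1 := measure_inter_le_of_isUpperSet_of_isLowerSet (isUpperSet_Ici s) hL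
      hL.ordConnected.measurableSet
    _ ≤ μ (Ici s) + ν (Ici t) - 1 := by grw [measure_setOf_measure_Iic_le μ]

lemma min_le_measure_graph [IsProbabilityMeasure ν] [NullSingletonClass ν] (hμ : μ (Icc 0 1)ᶜ = 0)
    (hg : ∀ x ∈ Icc 0 1, ν (Iic t) < μ (Iic x) → t ≤ g x) (s : ℝ) :
    min (μ (Ici s)) (ν (Ici t)) ≤ μ.restrict (Icc 0 1) {x | s ≤ x ∧ t ≤ g x} := by
  set L := {x | μ (Iic x) ≤ ν (Iic t)}
  have hL : IsLowerSet L := isLowerSet_setOf_measure_Iic_le μ _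
  have hLc : ν (Ici t) ≤ μ Lᶜ := by
    rw [← measure_congr (Ioi_ae_eq_Ici (μ := ν)), ← compl_Iic,
      prob_compl_eq_one_sub measurableSet_Iic, prob_compl_eq_one_sub hL.ordConnected.measurableSet]
    exact tsub_le_tsub_left (measure_setOf_measure_Iic_le μ _) 1
  calc min (μ (Ici s)) (ν (Ici t)) ≤ min (μ (Ici s)) (μ Lᶜ) := min_le_min_left _ hLc
    _ = μ (Ici s ∩ Lᶜ) := (measure_inter_of_isUpperSet (isUpperSet_Ici s) hL.compl).symm
    _ = μ (Ici s ∩ Lᶜ ∩ Icc 0 1) := (measure_inter_conull hμ).symm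
    _ ≤ μ ({x | s ≤ x ∧ t ≤ g x} ∩ Icc 0 1) :=
      measure_mono fun x ⟨⟨hs, hx⟩, hx01⟩ => ⟨⟨hs, hg x hx01 (not_le.1 hx)⟩, hx01⟩
    _ = μ.restrict (Icc 0 1) {x | s ≤ x ∧ t ≤ g x} :=
      (Measure.restrict_apply' measurableSet_Icc).symm

end Graph

lemma measure_Iic_eq_measure_Icc {μ : Measure ℝ} (hμ : μ (Icc 0 1)ᶜ = 0) {x : ℝ} (hx : x ≤ 1) :
    μ (Iic x) = μ (Icc 0 x) := by
  rw [← measure_inter_conull hμ, Iic_inter_Icc_of_le hx]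

section Quantile

variable {μ ν : Measure ℝ} [IsProbabilityMeasure μ] {y : ℝ → ℝ}

lemma ofReal_setIntegral_mul_le_of_isLeast (hμ : μ (Icc 0 1)ᶜ = 0)
    (hy : ∀ x ∈ Icc (0 : ℝ) 1, IsLeast {z ∈ Icc 0 1 | ν (Icc z 1) = μ (Icc 0 x)} (y x)) :
    ENNReal.ofReal (∫ x in Icc 0 1, x * y x ∂μ) ≤
      ∫⁻ q in Icc (0 : ℝ × ℝ) 1, (μ (Ici q.1) + ν (Ici q.2) - 1) := by
  have hanti : AntitoneOn y (Icc 0 1) :=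
    antitoneOn_of_isLeast (fun _ _ _ _ h => measure_mono (Icc_subset_Icc_right h))
      (fun _ _ h => measure_mono (Icc_subset_Icc_left h)) hy
  rw [ofReal_setIntegral_mul_eq_lintegral μ
    (aemeasurable_restrict_of_antitoneOn measurableSet_Icc hanti) fun x hx => (hy x hx).1.1]
  refine lintegral_mono fun q => measure_graph_le (fun x hx hyx => ?_) q.1
  rw [measure_Iic_eq_measure_Icc hμ hx.2, ← (hy x hx).1.2]
  exact measure_mono fun z hz => hyx.trans hz.1

lemma lintegral_min_le_ofReal_setIntegral_mul_of_isGreatest [IsProbabilityMeasure ν]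
    [NullSingletonClass ν] (hμ : μ (Icc 0 1)ᶜ = 0)
    (hy : ∀ x ∈ Icc (0 : ℝ) 1, IsGreatest {z ∈ Icc 0 1 | ν (Icc 0 z) = μ (Icc 0 x)} (y x)) :
    ∫⁻ q in Icc (0 : ℝ × ℝ) 1, min (μ (Ici q.1)) (ν (Ici q.2)) ≤
      ENNReal.ofReal (∫ x in Icc 0 1, x * y x ∂μ) := by
  have hmono : MonotoneOn y (Icc 0 1) :=
    monotoneOn_of_isGreatest (fun _ _ _ _ h => measure_mono (Icc_subset_Icc_right h))
      (fun _ _ h => measure_mono (Icc_subset_Icc_right h)) hy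
  rw [ofReal_setIntegral_mul_eq_lintegral μ
    (aemeasurable_restrict_of_monotoneOn measurableSet_Icc hmono) fun x hx => (hy x hx).1.1]
  refine lintegral_mono fun q => min_le_measure_graph hμ (fun x hx hlt => ?_) q.1
  by_contra! hyx
  rw [measure_Iic_eq_measure_Icc hμ hx.2, ← (hy x hx).1.2] at hlt
  exact hlt.not_ge (measure_mono fun z hz => hz.2.trans hyx.le)

end Quantile

lemma lintegral_empiricalMeasure_Ici {x y : ℕ → ℝ} (hx : ∀ n, x n ∈ Icc (0 : ℝ) 1)
    (hy : ∀ n, y n ∈ Icc (0 : ℝ) 1) (N : ℕ) :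
    ∫⁻ q in Icc (0 : ℝ × ℝ) 1, empiricalMeasure (fun n => (x n, y n)) N (Ici q) =
      ENNReal.ofReal (1 / (N : ℝ) * ∑ n ∈ Finset.Icc 1 N, x n * y n) := by
  rw [lintegral_measure_Ici_eq_lintegral_mul, lintegral_ofReal_empiricalMeasure]
  · exact fun n => mul_nonneg (hx n).1 (hy n).1
  · exact ae_empiricalMeasure_mem _ _ measurableSet_Icc fun n =>
      ⟨⟨(hx n).1, (hy n).1⟩, ⟨(hx n).2, (hy n).2⟩⟩

section Coupling

variable {μa μb : Measure ℝ} {ν : ℕ → Measure (ℝ × ℝ)} [∀ N, SFinite (ν N)]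

lemma lintegral_le_liminf_lintegral_measure_Ici (hν : ∀ N, ν N univ ≤ 1)
    (hfst : ∀ s, Tendsto (fun N => ν N (Prod.fst ⁻¹' Ici s)) atTop (𝓝 (μa (Ici s))))
    (hsnd : ∀ t, Tendsto (fun N => ν N (Prod.snd ⁻¹' Ici t)) atTop (𝓝 (μb (Ici t)))) :
    ∫⁻ q in Icc (0 : ℝ × ℝ) 1, (μa (Ici q.1) + μb (Ici q.2) - 1) ≤
      liminf (fun N => ∫⁻ q in Icc (0 : ℝ × ℝ) 1, ν N (Ici q)) atTop := by
  refine (lintegral_mono fun q => ?_).trans (lintegral_liminf_le fun N => measurable_measure_Ici _)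
  have hlim := ENNReal.Tendsto.sub ((hfst q.1).add (hsnd q.2)) tendsto_const_nhds
    (Or.inr ENNReal.one_ne_top)
  rw [← hlim.liminf_eq, Ici_prod_eq, Set.prod_eq]
  exact liminf_le_liminf (.of_forall fun N =>
    measure_add_measure_sub_one_le_measure_inter (hν N) _ (measurable_snd measurableSet_Ici))

lemma limsup_lintegral_measure_Ici_le (hν : ∀ N, ν N univ ≤ 1)
    (hfst : ∀ s, Tendsto (fun N => ν N (Prod.fst ⁻¹' Ici s)) atTop (𝓝 (μa (Ici s))))
    (hsnd : ∀ t, Tendsto (fun N => ν N (Prod.snd ⁻¹' Ici t)) atTop (𝓝 (μb (Ici t)))) :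
    limsup (fun N => ∫⁻ q in Icc (0 : ℝ × ℝ) 1, ν N (Ici q)) atTop ≤
      ∫⁻ q in Icc (0 : ℝ × ℝ) 1, min (μa (Ici q.1)) (μb (Ici q.2)) := by
  refine (limsup_lintegral_le 1 (fun N => measurable_measure_Ici _)
    (fun N => ae_of_all _ fun q => (measure_mono (subset_univ _)).trans (hν N))
    (by simpa using isCompact_Icc.measure_lt_top.ne)).trans (lintegral_mono fun q => le_min ?_ ?_)
  · exact (limsup_le_limsup (.of_forall fun N => measure_mono fun p hp => hp.1)).trans
      (hfst q.1).limsup_eq.le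
  · exact (limsup_le_limsup (.of_forall fun N => measure_mono fun p hp => hp.2)).trans
      (hsnd q.2).limsup_eq.le

end Coupling

end MeasureTheory

lemma le_liminf_of_ofReal_le_liminf {u : ℕ → ℝ} {c : ℝ} (h0 : ∀ n, 0 ≤ u n)
    (hbdd : IsBoundedUnder (· ≤ ·) atTop u)
    (h : ENNReal.ofReal c ≤ liminf (fun n => ENNReal.ofReal (u n)) atTop) : c ≤ liminf u atTop := by
  rwa [← ENNReal.ofReal_le_ofReal_iff (le_liminf_of_le hbdd.isCoboundedUnder_ge (.of_forall h0)),
    ENNReal.ofReal_mono.map_liminf_of_continuousAt u ENNReal.continuous_ofReal.continuousAt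
      hbdd.isCoboundedUnder_ge (isBoundedUnder_of ⟨0, h0⟩)]

lemma limsup_le_of_limsup_ofReal_le {u : ℕ → ℝ} {c : ℝ} (hc : 0 ≤ c) (h0 : ∀ n, 0 ≤ u n)
    (hbdd : IsBoundedUnder (· ≤ ·) atTop u)
    (h : limsup (fun n => ENNReal.ofReal (u n)) atTop ≤ ENNReal.ofReal c) : limsup u atTop ≤ c := by
  rwa [← ENNReal.ofReal_le_ofReal_iff hc,
    ENNReal.ofReal_limsup (isBoundedUnder_of ⟨0, h0⟩).isCoboundedUnder_le hbdd]

lemma average_mem_Icc {f : ℕ → ℝ} (hf : ∀ n, f n ∈ Icc (0 : ℝ) 1) (N : ℕ) :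
    1 / (N : ℝ) * ∑ n ∈ Finset.Icc 1 N, f n ∈ Icc (0 : ℝ) 1 := by
  refine ⟨mul_nonneg (by positivity) (Finset.sum_nonneg fun n _ => (hf n).1), ?_⟩
  rcases N.eq_zero_or_pos with rfl | hN
  · simp
  rw [one_div, inv_mul_le_iff₀ (by positivity), mul_one]
  calc ∑ n ∈ Finset.Icc 1 N, f n ≤ ∑ n ∈ Finset.Icc 1 N, (1 : ℝ) :=
        Finset.sum_le_sum fun n _ => (hf n).2
    _ = N := by simp

theorem rearrangement_inequality_general
    (μa μb : Measure ℝ) [IsProbabilityMeasure μa] [IsProbabilityMeasure μb]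
    (hμa_supp : μa (Set.Icc (0 : ℝ) 1)ᶜ = 0)
    (hμa_ac : μa ≪ volume) (hμb_ac : μb ≪ volume)
    (a b : ℕ → ℕ → ℝ)
    (ha_mem : ∀ N n, a N n ∈ Set.Icc (0 : ℝ) 1)
    (hb_mem : ∀ N n, b N n ∈ Set.Icc (0 : ℝ) 1)
    (ha_equi : ∀ f : ℝ → ℝ, Continuous f →
      Tendsto (fun N : ℕ => (1 / (N : ℝ)) * ∑ n ∈ Finset.Icc 1 N, f (a N n))
        atTop (nhds (∫ x, f x ∂μa)))
    (hb_equi : ∀ f : ℝ → ℝ, Continuous f →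
      Tendsto (fun N : ℕ => (1 / (N : ℝ)) * ∑ n ∈ Finset.Icc 1 N, f (b N n))
        atTop (nhds (∫ x, f x ∂μb)))
    (yl yu : ℝ → ℝ)
    (hyl : ∀ x ∈ Set.Icc (0 : ℝ) 1, yl x ∈ Set.Icc (0 : ℝ) 1 ∧
      μb (Set.Icc (yl x) 1) = μa (Set.Icc 0 x) ∧
      ∀ y ∈ Set.Icc (0 : ℝ) 1, μb (Set.Icc y 1) = μa (Set.Icc 0 x) → yl x ≤ y)
    (hyu : ∀ x ∈ Set.Icc (0 : ℝ) 1, yu x ∈ Set.Icc (0 : ℝ) 1 ∧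
      μb (Set.Icc 0 (yu x)) = μa (Set.Icc 0 x) ∧
      ∀ y ∈ Set.Icc (0 : ℝ) 1, μb (Set.Icc 0 y) = μa (Set.Icc 0 x) → y ≤ yu x) :
    (∫ x in Set.Icc (0 : ℝ) 1, x * yl x ∂μa) ≤
        liminf (fun N : ℕ => (1 / (N : ℝ)) * ∑ n ∈ Finset.Icc 1 N, a N n * b N n) atTop ∧
      limsup (fun N : ℕ => (1 / (N : ℝ)) * ∑ n ∈ Finset.Icc 1 N, a N n * b N n) atTop ≤
        ∫ x in Set.Icc (0 : ℝ) 1, x * yu x ∂μa := by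
  have : NullSingletonClass μa := ⟨fun _ => hμa_ac Real.volume_singleton⟩
  have : NullSingletonClass μb := ⟨fun _ => hμb_ac Real.volume_singleton⟩
  set ν := fun N => empiricalMeasure (fun n => (a N n, b N n)) N
  have hfst (s : ℝ) : Tendsto (fun N => ν N (Prod.fst ⁻¹' Ici s)) atTop (𝓝 (μa (Ici s))) := by
    simp_rw [ν, empiricalMeasure_preimage _ _ measurable_fst measurableSet_Ici]
    exact tendsto_empiricalMeasure_of_null_frontier μa a (fun f => ha_equi f f.continuous) (by simp)
  have hsnd (t : ℝ) : Tendsto (fun N => ν N (Prod.snd ⁻¹' Ici t)) atTop (𝓝 (μb (Ici t))) := by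
    simp_rw [ν, empiricalMeasure_preimage _ _ measurable_snd measurableSet_Ici]
    exact tendsto_empiricalMeasure_of_null_frontier μb b (fun f => hb_equi f f.continuous) (by simp)
  have hν (N : ℕ) := empiricalMeasure_le_one (fun n => (a N n, b N n)) N univ
  have hS (N : ℕ) := average_mem_Icc (fun n => unitInterval.mul_mem (ha_mem N n) (hb_mem N n)) N
  refine ⟨le_liminf_of_ofReal_le_liminf (fun N => (hS N).1) (isBoundedUnder_of ⟨1, (hS · |>.2)⟩) ?_,
    limsup_le_of_limsup_ofReal_le ?_ (fun N => (hS N).1) (isBoundedUnder_of ⟨1, (hS · |>.2)⟩) ?_⟩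
  · simp_rw [← lintegral_empiricalMeasure_Ici (ha_mem _) (hb_mem _)]
    exact (ofReal_setIntegral_mul_le_of_isLeast hμa_supp fun x hx =>
      ⟨⟨(hyl x hx).1, (hyl x hx).2.1⟩, fun z hz => (hyl x hx).2.2 z hz.1 hz.2⟩).trans
      (lintegral_le_liminf_lintegral_measure_Ici hν hfst hsnd)
  · exact setIntegral_nonneg measurableSet_Icc fun x hx => mul_nonneg hx.1 (hyu x hx).1.1
  · simp_rw [← lintegral_empiricalMeasure_Ici (ha_mem _) (hb_mem _)]
    exact (limsup_lintegral_measure_Ici_le hν hfst hsnd).trans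
      (lintegral_min_le_ofReal_setIntegral_mul_of_isGreatest hμa_supp fun x hx =>
        ⟨⟨(hyu x hx).1, (hyu x hx).2.1⟩, fun z hz => (hyu x hx).2.2 z hz.1 hz.2⟩)

/-- Matomäki's rearrangement-type inequality for jointly averaging two
equidistributed sequences. -/
theorem rearrangement_inequality
    (μa μb : Measure ℝ) [IsProbabilityMeasure μa] [IsProbabilityMeasure μb]
    (hμa_supp : μa (Set.Icc (0 : ℝ) 1)ᶜ = 0) (hμb_supp : μb (Set.Icc (0 : ℝ) 1)ᶜ = 0)
    (hμa_ac : μa ≪ volume) (hμb_ac : μb ≪ volume)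
    (a b : ℕ → ℕ → ℝ)
    (ha_mem : ∀ N n, a N n ∈ Set.Icc (0 : ℝ) 1)
    (hb_mem : ∀ N n, b N n ∈ Set.Icc (0 : ℝ) 1)
    (ha_equi : ∀ f : ℝ → ℝ, Continuous f →
      Tendsto (fun N : ℕ => (1 / (N : ℝ)) * ∑ n ∈ Finset.Icc 1 N, f (a N n))
        atTop (nhds (∫ x, f x ∂μa)))
    (hb_equi : ∀ f : ℝ → ℝ, Continuous f →
      Tendsto (fun N : ℕ => (1 / (N : ℝ)) * ∑ n ∈ Finset.Icc 1 N, f (b N n))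
        atTop (nhds (∫ x, f x ∂μb)))
    (yl yu : ℝ → ℝ)
    (hyl : ∀ x ∈ Set.Icc (0 : ℝ) 1, yl x ∈ Set.Icc (0 : ℝ) 1 ∧
      μb (Set.Icc (yl x) 1) = μa (Set.Icc 0 x) ∧
      ∀ y ∈ Set.Icc (0 : ℝ) 1, μb (Set.Icc y 1) = μa (Set.Icc 0 x) → yl x ≤ y)
    (hyu : ∀ x ∈ Set.Icc (0 : ℝ) 1, yu x ∈ Set.Icc (0 : ℝ) 1 ∧
      μb (Set.Icc 0 (yu x)) = μa (Set.Icc 0 x) ∧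
      ∀ y ∈ Set.Icc (0 : ℝ) 1, μb (Set.Icc 0 y) = μa (Set.Icc 0 x) → y ≤ yu x) :
    (∫ x in Set.Icc (0 : ℝ) 1, x * yl x ∂μa) ≤
        liminf (fun N : ℕ => (1 / (N : ℝ)) * ∑ n ∈ Finset.Icc 1 N, a N n * b N n) atTop ∧
      limsup (fun N : ℕ => (1 / (N : ℝ)) * ∑ n ∈ Finset.Icc 1 N, a N n * b N n) atTop ≤
        ∫ x in Set.Icc (0 : ℝ) 1, x * yu x ∂μa :=
  rearrangement_inequality_general μa μb hμa_supp hμa_ac hμb_ac a b ha_mem hb_mem ha_equi hb_equi yl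
    yu hyl hyu
end

section
/- Let k be a positive integer and x > 0 a real number. Then (k!/(2π)) · ∫_{−∞}^{∞} x^{1+it} / (1+it)^{k+1} dt equals 0 if 0 < x ≤ 1 and equals (log x)^k if x > 1. (This is the contour integral (k!/(2πi)) ∫_{(1)} x^s s^{−(k+1)} ds along the vertical line Re s = 1.) -/
/-!
With `L = log x`, the integrand is `x · e^{itL} · k!/(1+it)^{k+1}`, and `k!/(1+2πiw)^{k+1}` is the
Fourier transform of `f(u) = u₊^k e^{-u}` (a Laplace integral computed by integrating by parts).
For `k ≥ 1` this `f` is continuous and integrable and its transform is `O(1/(1+w²))`, so Fourier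
inversion at `L` turns the line integral into `2π · x · f(L)`, which is `(log x)^k` for `x > 1`
and `0` for `x ≤ 1`.
-/

open MeasureTheory Set Filter Complex
open scoped Real Topology Nat FourierTransform

section LaplaceTransformOfPow

variable {c : ℂ}

lemma norm_pow_mul_cexp_neg_mul {u : ℝ} (hu : 0 ≤ u) (k : ℕ) :
    ‖(u : ℂ) ^ k * cexp (-c * u)‖ = u ^ k * Real.exp (-c.re * u) := by
  simp [norm_exp, abs_of_nonneg hu]

lemma integrableOn_pow_mul_cexp_neg_mul_Ioi (hc : 0 < c.re) (k : ℕ) :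
    IntegrableOn (fun u : ℝ ↦ (u : ℂ) ^ k * cexp (-c * u)) (Ioi 0) := by
  have hreal : IntegrableOn (fun u : ℝ ↦ u ^ (k : ℝ) * Real.exp (-c.re * u ^ (1 : ℝ))) (Ioi 0) :=
    integrableOn_rpow_mul_exp_neg_mul_rpow (by linarith [k.cast_nonneg (α := ℝ)]) one_pos hc
  refine hreal.mono' (by fun_prop) ((ae_restrict_iff' measurableSet_Ioi).mpr ?_)
  filter_upwards with u hu
  rw [norm_pow_mul_cexp_neg_mul (le_of_lt hu), Real.rpow_natCast, Real.rpow_one]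

lemma tendsto_pow_mul_cexp_neg_mul_atTop (hc : 0 < c.re) (k : ℕ) :
    Tendsto (fun u : ℝ ↦ (u : ℂ) ^ k * cexp (-c * u)) atTop (𝓝 0) := by
  rw [tendsto_zero_iff_norm_tendsto_zero]
  refine (tendsto_congr' ?_).mpr
    (by simpa using tendsto_rpow_mul_exp_neg_mul_atTop_nhds_zero k c.re hc)
  filter_upwards [eventually_ge_atTop 0] with u hu
  rw [norm_pow_mul_cexp_neg_mul hu, neg_mul]

lemma integral_Ioi_pow_mul_cexp_neg_mul (hc : 0 < c.re) (k : ℕ) :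
    ∫ u in Ioi (0 : ℝ), (u : ℂ) ^ k * cexp (-c * u) = k ! / c ^ (k + 1) := by
  have hc0 : c ≠ 0 := fun h ↦ by simp [h] at hc
  induction k with
  | zero => simpa using integral_exp_mul_complex_Ioi (a := -c) (by simpa using hc) 0
  | succ n ih =>
    -- `u ^ (n+1) e^{-cu}` vanishes at both ends, so its derivative integrates to zero
    have hderiv : ∀ u ∈ Ici (0 : ℝ), HasDerivAt (fun v : ℝ ↦ (v : ℂ) ^ (n + 1) * cexp (-c * v))
        ((n + 1) * ((u : ℂ) ^ n * cexp (-c * u)) - c * ((u : ℂ) ^ (n + 1) * cexp (-c * u))) u := by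
      intro u _
      have := ((hasDerivAt_pow (n + 1) (u : ℂ)).mul
        (((hasDerivAt_id (u : ℂ)).const_mul (-c)).cexp)).comp_ofReal
      refine this.congr_deriv ?_
      simp only [id, mul_one, add_tsub_cancel_right]
      push_cast; ring
    have hint := integrableOn_pow_mul_cexp_neg_mul_Ioi hc
    have hzero := integral_Ioi_of_hasDerivAt_of_tendsto' hderiv
      (((hint n).const_mul _).sub ((hint (n + 1)).const_mul c))
      (tendsto_pow_mul_cexp_neg_mul_atTop hc (n + 1))
    rw [integral_sub ((hint n).const_mul _) ((hint (n + 1)).const_mul c), integral_const_mul,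
      integral_const_mul, ih] at hzero
    simp only [ofReal_zero, zero_pow n.succ_ne_zero, zero_mul, sub_zero, sub_eq_zero] at hzero
    rw [eq_div_of_mul_eq hc0 ((mul_comm _ _).trans hzero.symm), Nat.factorial_succ,
      pow_succ _ (n + 1)]
    push_cast
    ring

end LaplaceTransformOfPow

lemma one_add_sq_le_norm_one_add_mul_I_pow {n : ℕ} (hn : 2 ≤ n) (t : ℝ) :
    1 + t ^ 2 ≤ ‖(1 + t * I) ^ n‖ := by
  have hsq : ‖1 + t * I‖ ^ 2 = 1 + t ^ 2 := by
    simpa using ((normSq_add_mul_I 1 t).symm.trans (normSq_eq_norm_sq _)).symm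
  have hone : 1 ≤ ‖1 + t * I‖ := by nlinarith [norm_nonneg (1 + t * I)]
  rw [norm_pow, ← hsq]
  exact pow_le_pow_right₀ hone hn

lemma integrable_inv_one_add_mul_I_pow {n : ℕ} (hn : 2 ≤ n) :
    Integrable fun t : ℝ ↦ ((1 + t * I) ^ n)⁻¹ := by
  refine integrable_inv_one_add_sq.mono' (by fun_prop) (Eventually.of_forall fun t ↦ ?_)
  rw [norm_inv]
  exact inv_anti₀ (by positivity) (one_add_sq_le_norm_one_add_mul_I_pow hn t)

lemma integral_cexp_mul_smul_fourier_div_two_pi {E : Type*} [NormedAddCommGroup E]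
    [NormedSpace ℂ E] [CompleteSpace E] {f : ℝ → E} (hf : Integrable f) (hFf : Integrable (𝓕 f))
    {L : ℝ} (hfL : ContinuousAt f L) :
    ∫ t : ℝ, cexp (↑(t * L) * I) • 𝓕 f (t / (2 * π)) = (2 * π) • f L := by
  set g : ℝ → E := fun v ↦ cexp (↑(-2 * π * v * -L) * I) • 𝓕 f v
  calc ∫ t : ℝ, cexp (↑(t * L) * I) • 𝓕 f (t / (2 * π)) = ∫ t : ℝ, g (t / (2 * π)) := by
        congr! 4 with t
        push_cast
        field_simp
    _ = (2 * π) • ∫ v : ℝ, g v := by rw [Measure.integral_comp_div, abs_of_pos Real.two_pi_pos]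
    _ = (2 * π) • f L := by
        rw [← hf.fourierInv_fourier_eq hFf hfL, Real.fourierInv_eq_fourier_neg,
          Real.fourier_real_eq_integral_exp_smul]

lemma ofReal_cpow_one_add_mul_I {x : ℝ} (hx : 0 < x) (t : ℝ) :
    (x : ℂ) ^ (1 + t * I) = x * cexp (↑(t * Real.log x) * I) := by
  rw [cpow_add _ _ (ofReal_ne_zero.mpr hx.ne'), cpow_one, cpow_def_of_ne_zero
    (ofReal_ne_zero.mpr hx.ne'), ← ofReal_log hx.le]
  push_cast
  ring_nf

-- Since `0 ^ 0 = 1`, the lemmas below need `k ≠ 0` for this to vanish on `u ≤ 0`.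
noncomputable def powPosMulExpNeg (k : ℕ) (u : ℝ) : ℂ := ((max u 0 : ℝ) : ℂ) ^ k * cexp (-u)

namespace powPosMulExpNeg

variable {k : ℕ}

lemma continuous (k : ℕ) : Continuous (powPosMulExpNeg k) := by
  unfold powPosMulExpNeg; fun_prop

lemma cexp_mul_eq_indicator (hk : k ≠ 0) (a : ℂ) (v : ℝ) :
    cexp (a * v) * powPosMulExpNeg k v =
      (Ioi 0).indicator (fun u : ℝ ↦ (u : ℂ) ^ k * cexp (-(1 - a) * u)) v := by
  rcases lt_or_ge 0 v with hv | hv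
  · rw [indicator_of_mem (mem_Ioi.mpr hv), powPosMulExpNeg, max_eq_left hv.le, mul_left_comm,
      ← Complex.exp_add]
    ring_nf
  · rw [indicator_of_notMem (notMem_Ioi.mpr hv), powPosMulExpNeg, max_eq_right hv]
    simp [hk]

lemma integrable (hk : k ≠ 0) : Integrable (powPosMulExpNeg k) := by
  have := cexp_mul_eq_indicator hk 0
  simp only [zero_mul, Complex.exp_zero, one_mul, sub_zero] at this
  rw [funext this, integrable_indicator_iff measurableSet_Ioi]
  exact integrableOn_pow_mul_cexp_neg_mul_Ioi (by simp) k

lemma fourier_eq (hk : k ≠ 0) (w : ℝ) :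
    𝓕 (powPosMulExpNeg k) w = k ! / (1 + (2 * π * w : ℝ) * I) ^ (k + 1) := by
  rw [Real.fourier_real_eq_integral_exp_smul]
  simp_rw [smul_eq_mul, show ∀ v : ℝ, (↑(-2 * π * v * w) * I) = (-(2 * π * w : ℝ) * I) * v by
    intro v; push_cast; ring, cexp_mul_eq_indicator hk]
  rw [integral_indicator measurableSet_Ioi, integral_Ioi_pow_mul_cexp_neg_mul (by simp) k]
  ring_nf

lemma integrable_fourier (hk : k ≠ 0) : Integrable (𝓕 (powPosMulExpNeg k)) := by
  rw [funext (fourier_eq hk)]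
  simp_rw [div_eq_mul_inv]
  exact ((integrable_inv_one_add_mul_I_pow (by omega)).comp_mul_left' (by positivity)).const_mul _

lemma ofReal_mul_apply_log (hk : k ≠ 0) {x : ℝ} (hx : 0 < x) :
    (x : ℂ) * powPosMulExpNeg k (Real.log x) = if 1 < x then (Real.log x : ℂ) ^ k else 0 := by
  split_ifs with hx1
  · rw [powPosMulExpNeg, max_eq_left (Real.log_pos hx1).le, ← ofReal_neg, ← ofReal_exp,
      Real.exp_neg, Real.exp_log hx, mul_left_comm, ← ofReal_mul, mul_inv_cancel₀ hx.ne',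
      ofReal_one, mul_one]
  · simp [powPosMulExpNeg, Real.log_nonpos hx.le (not_lt.mp hx1), hk]

end powPosMulExpNeg

/-- Mellin inversion: `(k!/(2πi)) ∫_{(1)} x^s s^{−(k+1)} ds` equals `0` for
`0 < x ≤ 1` and `(log x)^k` for `x > 1`; the line integral is parametrized as
`s = 1 + it`, giving `(k!/(2π)) ∫_ℝ x^{1+it}/(1+it)^{k+1} dt`. -/
theorem mellin_inversion_line_integral (k : ℕ) (hk : 1 ≤ k) (x : ℝ) (hx : 0 < x) :
    ((k.factorial : ℂ) / (2 * Real.pi)) *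
        ∫ t : ℝ, (x : ℂ) ^ ((1 : ℂ) + t * Complex.I) /
          ((1 : ℂ) + t * Complex.I) ^ (k + 1) =
      if 1 < x then ((Real.log x : ℂ)) ^ k else 0 := by
  have hk0 : k ≠ 0 := by omega
  have hfact : (k ! : ℂ) ≠ 0 := Nat.cast_ne_zero.mpr k.factorial_ne_zero
  have hinversion := integral_cexp_mul_smul_fourier_div_two_pi (powPosMulExpNeg.integrable hk0)
    (powPosMulExpNeg.integrable_fourier hk0) ((powPosMulExpNeg.continuous k).continuousAt)
    (L := Real.log x)
  have hintegrand : ∀ t : ℝ, (x : ℂ) ^ ((1 : ℂ) + t * I) / ((1 : ℂ) + t * I) ^ (k + 1) =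
      (x / k !) * (cexp (↑(t * Real.log x) * I) • 𝓕 (powPosMulExpNeg k) (t / (2 * π))) := by
    intro t
    rw [powPosMulExpNeg.fourier_eq hk0, ofReal_cpow_one_add_mul_I hx, smul_eq_mul]
    field_simp
  rw [funext hintegrand, integral_const_mul, hinversion,
    ← powPosMulExpNeg.ofReal_mul_apply_log hk0 hx, real_smul]
  push_cast
  field_simp
end

section
/- Let x ≥ 1 be a real number, let k and l be nonnegative integers, and let ε > 0. Then the iterated contour integral (1/(2πi))² ∮_{|s₂|=2ε} ∮_{|s₁|=ε} x^{s₁+s₂} / ((s₁+s₂)^l · (s₁ s₂)^{k+1}) ds₁ ds₂, taken over the positively oriented circles of radii ε and 2ε centered at the origin, equals binom(2k, k) · (log x)^{2k+l} / (2k+l)!. -/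
/-!
With `L = log x` and `F s = exp (L s) / s ^ l`, the integrand is `F (s₁ + s₂) / (s₁ s₂) ^ (k + 1)`.
Since `|s₁| < |s₂|`, the map `s₁ ↦ F (s₁ + s₂)` is holomorphic on the inner disc, so Cauchy's
formula turns the inner integral into `2πi F⁽ᵏ⁾(s₂) / (k! s₂ ^ (k + 1))`. Integrating by parts
`k` times on the outer circle moves the derivatives onto `s₂ ^ -(k + 1)`, producing the factor
`(k + 1) ⋯ (2k) = (2k)! / k!` and leaving
`∮ exp (L s) / s ^ (2k + l + 1) = 2πi L ^ (2k + l) / (2k + l)!`.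
-/

open Metric Complex
open scoped Nat

theorem circleIntegral_div_sub_pow_succ {f : ℂ → ℂ} {c : ℂ} {R : ℝ} (hR : 0 < R)
    (hf : DifferentiableOn ℂ f (closedBall c R)) (n : ℕ) :
    (∮ z in C(c, R), f z / (z - c) ^ (n + 1)) =
      2 * Real.pi * I / n ! * iteratedDeriv n f c := by
  simpa [div_eq_inv_mul] using hf.circleIntegral_one_div_sub_center_pow_smul hR n

/-- Integration by parts: the derivative of `g z / (z - c) ^ (m + 1)` integrates to zero. -/
theorem circleIntegral_deriv_div_sub_pow {g : ℂ → ℂ} {U : Set ℂ} {c : ℂ} {R : ℝ} (hR : 0 < R)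
    (hg : AnalyticOnNhd ℂ g U) (hU : sphere c R ⊆ U) (m : ℕ) :
    (∮ z in C(c, R), deriv g z / (z - c) ^ (m + 1)) =
      (m + 1) * ∮ z in C(c, R), g z / (z - c) ^ (m + 2) := by
  have hne : ∀ z ∈ sphere c R, z - c ≠ 0 := fun z hz =>
    sub_ne_zero.2 (ne_of_mem_sphere hz hR.ne')
  have hderiv : ∀ z ∈ sphere c R, HasDerivAt (fun z => g z / (z - c) ^ (m + 1))
      (deriv g z / (z - c) ^ (m + 1) - (m + 1) * (g z / (z - c) ^ (m + 2))) z := by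
    intro z hz
    have hpow : HasDerivAt (fun w => (w - c) ^ (m + 1)) ((m + 1) * (z - c) ^ m) z := by
      simpa using ((hasDerivAt_id z).sub_const c).fun_pow (m + 1)
    have hd := (hg z (hU hz)).differentiableAt.hasDerivAt.fun_div hpow (pow_ne_zero _ (hne z hz))
    refine hd.congr_deriv ?_
    have hzc := hne z hz
    field_simp
    ring
  have hint : ∀ {h : ℂ → ℂ} (a : ℂ) (p : ℕ), AnalyticOnNhd ℂ h U →
      CircleIntegrable (fun z => a * (h z / (z - c) ^ p)) c R := fun a p hh =>
    ContinuousOn.circleIntegrable hR.le fun z hz =>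
      (continuousAt_const.mul ((hh z (hU hz)).continuousAt.div
        ((continuous_sub_right c).pow p).continuousAt
        (pow_ne_zero p (hne z hz)))).continuousWithinAt
  have hzero := circleIntegral.integral_eq_zero_of_hasDerivWithinAt hR.le
    fun z hz => (hderiv z hz).hasDerivWithinAt
  rwa [circleIntegral.integral_sub (by simpa using hint 1 (m + 1) hg.deriv) (hint _ _ hg),
    circleIntegral.integral_const_mul, sub_eq_zero] at hzero

theorem circleIntegral_iteratedDeriv_div_sub_pow {g : ℂ → ℂ} {U : Set ℂ} {c : ℂ} {R : ℝ}
    (hR : 0 < R) (hg : AnalyticOnNhd ℂ g U) (hU : sphere c R ⊆ U) (j m : ℕ) :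
    (∮ z in C(c, R), iteratedDeriv j g z / (z - c) ^ (m + 1)) =
      (m + 1).ascFactorial j * ∮ z in C(c, R), g z / (z - c) ^ (m + j + 1) := by
  induction j generalizing g with
  | zero => simp
  | succ j ih =>
    rw [iteratedDeriv_succ', ih hg.deriv, circleIntegral_deriv_div_sub_pow hR hg hU,
      Nat.ascFactorial_succ, show m + (j + 1) + 1 = m + j + 2 by ring]
    push_cast
    ring

theorem circleIntegral_comp_add_div_pow_succ {f : ℂ → ℂ} {w : ℂ} {R : ℝ} (hR : 0 < R)
    (hf : DifferentiableOn ℂ f (closedBall w R)) (n : ℕ) :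
    (∮ z in C(0, R), f (z + w) / z ^ (n + 1)) =
      2 * Real.pi * I / n ! * iteratedDeriv n f w := by
  have hshift : DifferentiableOn ℂ (fun z => f (z + w)) (closedBall 0 R) :=
    hf.comp (by fun_prop) fun z hz => by simpa [add_comm] using hz
  simpa [iteratedDeriv_comp_add_const] using circleIntegral_div_sub_pow_succ hR hshift n

theorem circleIntegral_exp_mul_div_pow_succ (a : ℂ) {R : ℝ} (hR : 0 < R) (n : ℕ) :
    (∮ z in C(0, R), exp (a * z) / z ^ (n + 1)) = 2 * Real.pi * I / n ! * a ^ n := by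
  have hexp : Differentiable ℂ fun z => exp (a * z) := by fun_prop
  have := circleIntegral_div_sub_pow_succ (c := 0) hR hexp.differentiableOn n
  rw [iteratedDeriv_cexp_const_mul] at this
  simpa only [sub_zero, mul_zero, exp_zero, mul_one] using this

theorem differentiableOn_exp_mul_div_pow (a : ℂ) (l : ℕ) :
    DifferentiableOn ℂ (fun s => exp (a * s) / s ^ l) {0}ᶜ :=
  DifferentiableOn.div (by fun_prop) (by fun_prop) fun _ hs => pow_ne_zero l hs

theorem circleIntegral_cpow_add_div_pow_mul_pow {x : ℝ} (hx : 0 < x) (k l : ℕ) {ε : ℝ}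
    (hε : 0 < ε) {w : ℂ} (hw : ε < ‖w‖) :
    (∮ s in C(0, ε), (x : ℂ) ^ (s + w) / ((s + w) ^ l * (s * w) ^ (k + 1))) =
      2 * Real.pi * I / k ! *
        (iteratedDeriv k (fun s => exp (Real.log x * s) / s ^ l) w / w ^ (k + 1)) := by
  have hball : closedBall w ε ⊆ {0}ᶜ := fun s hs h0 => by
    rw [h0, mem_closedBall, dist_comm, dist_zero_right] at hs
    linarith
  have hintegrand (s : ℂ) :
      (x : ℂ) ^ (s + w) / ((s + w) ^ l * (s * w) ^ (k + 1)) =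
        (w ^ (k + 1))⁻¹ * (exp (Real.log x * (s + w)) / (s + w) ^ l / s ^ (k + 1)) := by
    rw [cpow_def_of_ne_zero (by exact_mod_cast hx.ne'), ← ofReal_log hx.le, mul_pow]
    ring
  rw [circleIntegral.integral_congr hε.le fun s _ => hintegrand s,
    circleIntegral.integral_const_mul, circleIntegral_comp_add_div_pow_succ hε
      ((differentiableOn_exp_mul_div_pow _ l).mono hball)]
  ring

theorem circleIntegral_iteratedDeriv_exp_mul_div_pow (a : ℂ) (k l : ℕ) {R : ℝ} (hR : 0 < R) :
    (∮ s in C(0, R), iteratedDeriv k (fun s => exp (a * s) / s ^ l) s / s ^ (k + 1)) =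
      (k + 1).ascFactorial k * (2 * Real.pi * I / (2 * k + l)! * a ^ (2 * k + l)) := by
  have hsphere : sphere (0 : ℂ) R ⊆ {0}ᶜ := fun s hs h0 => by
    rw [h0, mem_sphere_zero_iff_norm, norm_zero] at hs
    exact hR.ne hs
  have hparts := circleIntegral_iteratedDeriv_div_sub_pow hR
    ((differentiableOn_exp_mul_div_pow a l).analyticOnNhd isOpen_compl_singleton) hsphere k k
  simp only [sub_zero] at hparts
  rw [hparts, ← circleIntegral_exp_mul_div_pow_succ a hR]
  congr 1
  refine circleIntegral.integral_congr hR.le fun s _ => ?_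
  simp only [div_div, ← pow_add]
  ring_nf

/-- Residue computation (after Motohashi): the iterated contour integral
`(1/(2πi))² ∮_{|s₂|=2ε} ∮_{|s₁|=ε} x^{s₁+s₂}/((s₁+s₂)^l (s₁s₂)^{k+1}) ds₁ ds₂`
equals `binom(2k,k)(log x)^{2k+l}/(2k+l)!`. -/
theorem double_residue_integral (x : ℝ) (hx : 1 ≤ x) (k l : ℕ) (ε : ℝ)
    (hε : 0 < ε) :
    (1 / (2 * Real.pi * Complex.I)) ^ 2 *
        (∮ s₂ in C(0, 2 * ε), ∮ s₁ in C(0, ε),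
          (x : ℂ) ^ (s₁ + s₂) / ((s₁ + s₂) ^ l * (s₁ * s₂) ^ (k + 1))) =
      (Nat.choose (2 * k) k : ℂ) * (Real.log x : ℂ) ^ (2 * k + l) /
        (Nat.factorial (2 * k + l) : ℂ) := by
  have h2ε : 0 < 2 * ε := by positivity
  have hinner (w : ℂ) (hw : w ∈ sphere (0 : ℂ) (2 * ε)) :=
    circleIntegral_cpow_add_div_pow_mul_pow (one_pos.trans_le hx) k l hε
      (w := w) (by rw [mem_sphere_zero_iff_norm.1 hw]; linarith)
  rw [circleIntegral.integral_congr h2ε.le hinner, circleIntegral.integral_const_mul,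
    circleIntegral_iteratedDeriv_exp_mul_div_pow _ k l h2ε,
    Nat.ascFactorial_eq_factorial_mul_choose, ← two_mul]
  have hk : (k ! : ℂ) ≠ 0 := Nat.cast_ne_zero.2 k.factorial_ne_zero
  push_cast
  field_simp
end
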